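/- (Purity concentration, achievability) For every density operator ρ on a d_A-dimensional Hilbert space and every ε, δ > 0, there exists n₀ such that for all n ≥ n₀ there is a decomposition H_A^{⊗n} ≅ H_{A_p} ⊗ H_{A_g} with dim H_{A_p} ≥ 2^{n(log d_A − H(ρ) − δ)}, a unitary U on H_A^{⊗n}, and a unit vector |0⟩ ∈ H_{A_p}, such that ‖Tr_{A_g}(U ρ^{⊗n} U†) − |0⟩⟨0|‖₁ ≤ ε. -/

import Mathlib

open Matrix Kronecker BigOperators ComplexOrder

/-- Trace norm `‖A‖₁ = Tr √(Aᴴ A)`. -/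
noncomputable def traceNorm {n : Type*} [Fintype n] [DecidableEq n]
    (A : Matrix n n ℂ) : ℝ :=
  (((Matrix.posSemidef_conjTranspose_mul_self A).1.eigenvectorUnitary.1 *
      Matrix.diagonal (((↑) : ℝ → ℂ) ∘ Real.sqrt ∘ (Matrix.posSemidef_conjTranspose_mul_self A).1.eigenvalues) *
      (star (Matrix.posSemidef_conjTranspose_mul_self A).1.eigenvectorUnitary : Matrix n n ℂ)).trace).re

/-- Von Neumann entropy (base 2), via eigenvalues; `0` for non-Hermitian input. -/
noncomputable def vnEntropy {n : Type*} [Fintype n] [DecidableEq n]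
    (ρ : Matrix n n ℂ) : ℝ :=
  if h : ρ.IsHermitian then
    -∑ i, (h.eigenvalues i) * Real.logb 2 (h.eigenvalues i)
  else 0

/-- A density operator: positive semidefinite with unit trace. -/
def IsDensity {n : Type*} [Fintype n] (ρ : Matrix n n ℂ) : Prop :=
  ρ.PosSemidef ∧ ρ.trace = 1

/-- Rank-one projector `|v⟩⟨v|`. -/
noncomputable def proj {n : Type*} (v : n → ℂ) : Matrix n n ℂ :=
  Matrix.vecMulVec v (star v)

/-- Partial trace over the second tensor factor. -/
noncomputable def ptraceSnd {a b : Type*} [Fintype b]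
    (ρ : Matrix (a × b) (a × b) ℂ) : Matrix a a ℂ :=
  Matrix.of fun i j => ∑ k, ρ (i, k) (j, k)

/-- Partial trace over the first tensor factor. -/
noncomputable def ptraceFst {a b : Type*} [Fintype a]
    (ρ : Matrix (a × b) (a × b) ℂ) : Matrix b b ℂ :=
  Matrix.of fun i j => ∑ k, ρ (k, i) (k, j)

/-- Quantum mutual information `I(A;B) = H(A) + H(B) − H(AB)`. -/
noncomputable def mutualInfo {a b : Type*} [Fintype a] [Fintype b]
    [DecidableEq a] [DecidableEq b] (ρ : Matrix (a × b) (a × b) ℂ) : ℝ :=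
  vnEntropy (ptraceSnd ρ) + vnEntropy (ptraceFst ρ) - vnEntropy ρ

/-- `n`-fold tensor power of a matrix. -/
noncomputable def tpow {d : ℕ} (ρ : Matrix (Fin d) (Fin d) ℂ) (n : ℕ) :
    Matrix (Fin n → Fin d) (Fin n → Fin d) ℂ :=
  Matrix.of fun f g => ∏ i, ρ (f i) (g i)

/-- The cq state obtained by measuring the `A` part of a bipartite state with POVM `Λ`:
`ρ^{XB} = Σ_x |x⟩⟨x| ⊗ Tr_A((Λ_x ⊗ I)ρ)`. -/
noncomputable def measureA {a b m : Type*} [Fintype a] [DecidableEq m]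
    (Λ : m → Matrix a a ℂ) (ρ : Matrix (a × b) (a × b) ℂ) :
    Matrix (m × b) (m × b) ℂ :=
  Matrix.of fun xi yj =>
    if xi.1 = yj.1 then ∑ k, ∑ l, (Λ xi.1) k l * ρ (l, xi.2) (k, yj.2) else 0

/-- Unitarity for (possibly rectangular between index types) matrices. -/
def IsUnitaryMat {p q : Type*} [Fintype p] [Fintype q] [DecidableEq p] [DecidableEq q]
    (U : Matrix p q ℂ) : Prop :=
  U * Uᴴ = 1 ∧ Uᴴ * U = 1

/-!
Diagonalise `ρ = W diag(λ) W†`, so that `ρ^{⊗n}` is diagonal in the product eigenbasis, with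
weights `q(x) = ∏ λ(xᵢ)`. By Chebyshev's inequality for the i.i.d. surprisals `-log λ(xᵢ)`,
the typical set `T = {x | q(x) ≥ 2^{-n(H+δ/2)}}` carries weight `≥ 1 - ε/2` for large `n`, and
`|T| ≤ 2^{n(H+δ/2)}`. Choose the least `k` with `|T| ≤ d^k` and relabel the product basis as
`Fin (d^(n-k)) × Fin (d^k)` so that `T` lies in the slice `{i₀} × Fin (d^k)`. The reduced state
on the first factor is then diagonal with weight `≥ 1 - ε/2` at `i₀`, hence `ε`-close in trace
norm to `|i₀⟩⟨i₀|`, and `d^(n-k) ≥ d^n / (d·|T|) ≥ 2^{n(log d - H - δ)}` once `d ≤ 2^{nδ/2}`.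
-/

open Finset Filter

section ProductWeights

variable {α : Type*} [Fintype α] (w : α → ℝ)

theorem sum_prod_eq_one (hw : ∑ a, w a = 1) (n : ℕ) :
    ∑ x : Fin n → α, ∏ i, w (x i) = 1 := by
  rw [← Fintype.sum_pow, hw, one_pow]

theorem sum_prod_mul_sum_sq {c : α → ℝ} (hw : ∑ a, w a = 1) (hc : ∑ a, w a * c a = 0)
    (n : ℕ) : ∑ x : Fin n → α, (∏ i, w (x i)) * (∑ i, c (x i)) ^ 2 = n * ∑ a, w a * c a ^ 2 := by
  induction n with
  | zero => simp
  | succ n ih =>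
    rw [← (Fin.consEquiv fun _ => α).sum_comp, Fintype.sum_prod_type]
    simp only [Fin.consEquiv_apply, Fin.prod_univ_succ, Fin.sum_univ_succ, Fin.cons_zero,
      Fin.cons_succ]
    have expand : ∀ (a : α) (q s : ℝ), w a * q * (c a + s) ^ 2
        = w a * c a ^ 2 * q + w a * c a * (2 * (q * s)) + w a * (q * s ^ 2) := by
      intros; ring
    simp only [expand, sum_add_distrib, ← mul_sum, ← sum_mul, hc, ih, sum_prod_eq_one w hw, hw]
    push_cast
    ring

theorem sum_prod_filter_lt_sum_mul_le (hw0 : ∀ a, 0 ≤ w a) (hw : ∑ a, w a = 1) {c : α → ℝ}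
    (hc : ∑ a, w a * c a = 0) {δ : ℝ} (hδ : 0 ≤ δ) (n : ℕ) :
    (∑ x : Fin n → α with n * δ < ∑ i, c (x i), ∏ i, w (x i)) * (n * δ ^ 2)
      ≤ ∑ a, w a * c a ^ 2 := by
  have hq : ∀ x : Fin n → α, 0 ≤ ∏ i, w (x i) := fun x => prod_nonneg fun i _ => hw0 (x i)
  have key : (∑ x : Fin n → α with n * δ < ∑ i, c (x i), ∏ i, w (x i)) * (n * δ) ^ 2
      ≤ n * ∑ a, w a * c a ^ 2 :=
    calc _ = ∑ x : Fin n → α with n * δ < ∑ i, c (x i), (∏ i, w (x i)) * (n * δ) ^ 2 := sum_mul ..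
      _ ≤ ∑ x : Fin n → α with n * δ < ∑ i, c (x i), (∏ i, w (x i)) * (∑ i, c (x i)) ^ 2 := by
        refine sum_le_sum fun x hx => mul_le_mul_of_nonneg_left ?_ (hq x)
        exact pow_le_pow_left₀ (by positivity) (mem_filter.mp hx).2.le 2
      _ ≤ ∑ x : Fin n → α, (∏ i, w (x i)) * (∑ i, c (x i)) ^ 2 :=
        sum_le_sum_of_subset_of_nonneg (subset_univ _) fun x _ _ => mul_nonneg (hq x) (sq_nonneg _)
      _ = n * ∑ a, w a * c a ^ 2 := sum_prod_mul_sum_sq w hw hc n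
  rcases n.eq_zero_or_pos with rfl | hn
  · simpa using sum_nonneg fun a _ => mul_nonneg (hw0 a) (sq_nonneg (c a))
  · have hn' : (0 : ℝ) < n := by exact_mod_cast hn
    nlinarith

noncomputable def typicalSet (n : ℕ) (t : ℝ) : Finset (Fin n → α) :=
  {x | (2 : ℝ) ^ (-(n * t)) ≤ ∏ i, w (x i)}

theorem card_typicalSet_le (hw0 : ∀ a, 0 ≤ w a) (hw : ∑ a, w a = 1) (n : ℕ) (t : ℝ) :
    (#(typicalSet w n t) : ℝ) ≤ 2 ^ (n * t) := by
  have hmass : #(typicalSet w n t) * (2 : ℝ) ^ (-(n * t)) ≤ 1 :=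
    calc _ = ∑ x ∈ typicalSet w n t, (2 : ℝ) ^ (-(n * t)) := by rw [sum_const, nsmul_eq_mul]
      _ ≤ ∑ x ∈ typicalSet w n t, ∏ i, w (x i) := sum_le_sum fun x hx => (mem_filter.mp hx).2
      _ ≤ ∑ x : Fin n → α, ∏ i, w (x i) := sum_le_sum_of_subset_of_nonneg (subset_univ _)
          fun x _ _ => prod_nonneg fun i _ => hw0 (x i)
      _ = 1 := sum_prod_eq_one w hw n
  rwa [Real.rpow_neg zero_le_two, ← div_eq_mul_inv, div_le_one (by positivity)] at hmass

theorem lt_sum_neg_logb_of_notMem_typicalSet (hw0 : ∀ a, 0 ≤ w a) {n : ℕ} {t : ℝ}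
    {x : Fin n → α} (hx : x ∉ typicalSet w n t) (hx0 : ∏ i, w (x i) ≠ 0) :
    n * t < ∑ i, -Real.logb 2 (w (x i)) := by
  have hpos : 0 < ∏ i, w (x i) := lt_of_le_of_ne (prod_nonneg fun i _ => hw0 (x i)) hx0.symm
  have hlt : Real.logb 2 (∏ i, w (x i)) < -(n * t) :=
    (Real.logb_lt_iff_lt_rpow one_lt_two hpos).mpr (by simpa [typicalSet] using hx)
  rw [Real.logb_prod _ _ fun i _ => (prod_ne_zero_iff.mp hx0) i (mem_univ i)] at hlt
  rw [sum_neg_distrib]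
  linarith

theorem eventually_one_sub_le_sum_typicalSet (hw0 : ∀ a, 0 ≤ w a) (hw : ∑ a, w a = 1)
    {ε δ : ℝ} (hε : 0 < ε) (hδ : 0 < δ) :
    ∀ᶠ n in atTop, 1 - ε ≤ ∑ x ∈ typicalSet w n (∑ a, w a * -Real.logb 2 (w a) + δ),
      ∏ i, w (x i) := by
  classical
  set H := ∑ a, w a * -Real.logb 2 (w a)
  set c : α → ℝ := fun a => -Real.logb 2 (w a) - H
  have hc : ∑ a, w a * c a = 0 := by
    simp only [c, mul_sub, sum_sub_distrib, ← sum_mul, hw, one_mul]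
    exact sub_self H
  filter_upwards [eventually_gt_atTop 0,
    tendsto_natCast_atTop_atTop.eventually_ge_atTop ((∑ a, w a * c a ^ 2) / (ε * δ ^ 2))]
    with n hn hV
  set q : (Fin n → α) → ℝ := fun x => ∏ i, w (x i)
  have hdev : ∀ x ∉ typicalSet w n (H + δ), q x ≠ 0 → n * δ < ∑ i, c (x i) := by
    intro x hx hx0
    have := lt_sum_neg_logb_of_notMem_typicalSet w hw0 hx hx0
    simp only [c, sum_sub_distrib, sum_const, card_univ, Fintype.card_fin, nsmul_eq_mul]
    linarith
  have hbad : ∑ x ∈ (typicalSet w n (H + δ))ᶜ, q x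
      ≤ ∑ x : Fin n → α with n * δ < ∑ i, c (x i), q x := by
    rw [← sum_filter_ne_zero]
    refine sum_le_sum_of_subset_of_nonneg (fun x hx => ?_)
      fun x _ _ => prod_nonneg fun i _ => hw0 (x i)
    simp only [mem_filter, mem_compl, mem_univ, true_and] at hx ⊢
    exact hdev x hx.1 hx.2
  have hcheb : ∑ x : Fin n → α with n * δ < ∑ i, c (x i), q x ≤ ε := by
    have hnδ : (0 : ℝ) < n * δ ^ 2 := by positivity
    refine le_of_mul_le_mul_right ?_ hnδ
    calc _ ≤ ∑ a, w a * c a ^ 2 := sum_prod_filter_lt_sum_mul_le w hw0 hw hc hδ.le n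
      _ ≤ ε * (n * δ ^ 2) := by rw [div_le_iff₀ (by positivity)] at hV; linarith
  have hsplit := sum_add_sum_compl (typicalSet w n (H + δ)) q
  rw [sum_prod_eq_one w hw] at hsplit
  linarith

end ProductWeights

theorem Nat.exists_le_pow_le_mul_max {b m n : ℕ} (hb : 0 < b) (hm : m ≤ b ^ n) :
    ∃ k ≤ n, m ≤ b ^ k ∧ b ^ k ≤ b * max m 1 := by
  classical
  have hex : ∃ k, m ≤ b ^ k := ⟨n, hm⟩
  refine ⟨Nat.find hex, Nat.find_min' hex hm, Nat.find_spec hex, ?_⟩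
  rcases Nat.eq_zero_or_pos (Nat.find hex) with h0 | hpos
  · rw [h0, pow_zero]
    exact Nat.one_le_iff_ne_zero.mpr (Nat.mul_ne_zero hb.ne' (by omega))
  · have hlt : b ^ (Nat.find hex - 1) < m := not_le.mp (Nat.find_min hex (by omega))
    calc b ^ Nat.find hex = b * b ^ (Nat.find hex - 1) := by
          rw [← pow_succ']; congr 1; omega
      _ ≤ b * max m 1 := Nat.mul_le_mul_left b (hlt.le.trans (le_max_left m 1))

theorem exists_equiv_forall_mem_of_card_le {α β : Type*} [Fintype α] [Fintype β]
    [DecidableEq β] (hαβ : Fintype.card α = Fintype.card β)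
    {s : Finset α} {t : Finset β} (hst : #s ≤ #t) :
    ∃ e : α ≃ β, ∀ x ∈ s, e x ∈ t := by
  let e₀ := Fintype.equivOfCardEq hαβ
  obtain ⟨t', ht't, ht'⟩ := exists_subset_card_eq hst
  let e₁ : {y // y ∈ s.map e₀.toEmbedding} ≃ {y // y ∈ t'} :=
    Fintype.equivOfCardEq (by rw [Fintype.card_coe, Fintype.card_coe, card_map, ht'])
  refine ⟨e₀.trans e₁.extendSubtype, fun x hx => ht't ?_⟩
  exact e₁.extendSubtype_mem _ (mem_map_of_mem _ hx)

section TensorPower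

variable {d n : ℕ}

theorem tpow_mul (A B : Matrix (Fin d) (Fin d) ℂ) : tpow A n * tpow B n = tpow (A * B) n := by
  ext f g
  simp only [tpow, mul_apply, of_apply, Fintype.prod_sum fun i a => A (f i) a * B a (g i),
    prod_mul_distrib]

theorem tpow_one : tpow (1 : Matrix (Fin d) (Fin d) ℂ) n = 1 := by
  ext f g
  simp [tpow, one_apply, Fintype.prod_boole, funext_iff]

theorem tpow_conjTranspose (A : Matrix (Fin d) (Fin d) ℂ) : (tpow A n)ᴴ = tpow Aᴴ n := by
  ext f g
  simp [tpow, star_prod]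

theorem tpow_diagonal (v : Fin d → ℂ) :
    tpow (diagonal v) n = diagonal fun f => ∏ i, v (f i) := by
  ext f g
  by_cases h : f = g
  · simp [tpow, h]
  · obtain ⟨i, hi⟩ := Function.ne_iff.mp h
    simp only [tpow, of_apply, diagonal_apply_ne _ h]
    exact prod_eq_zero (mem_univ i) (diagonal_apply_ne v hi)

theorem tpow_mem_unitaryGroup {W : Matrix (Fin d) (Fin d) ℂ} (hW : W ∈ unitaryGroup (Fin d) ℂ) :
    tpow W n ∈ unitaryGroup (Fin n → Fin d) ℂ := by
  rw [mem_unitaryGroup_iff, star_eq_conjTranspose, tpow_conjTranspose, tpow_mul,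
    ← star_eq_conjTranspose, mem_unitaryGroup_iff.mp hW, tpow_one]

theorem Matrix.IsHermitian.conj_tpow_eq_diagonal {A : Matrix (Fin d) (Fin d) ℂ}
    (hA : A.IsHermitian) :
    star (tpow (hA.eigenvectorUnitary : Matrix (Fin d) (Fin d) ℂ) n) * tpow A n *
        tpow (hA.eigenvectorUnitary : Matrix (Fin d) (Fin d) ℂ) n
      = diagonal fun f => ∏ i, (hA.eigenvalues (f i) : ℂ) := by
  set W := tpow (hA.eigenvectorUnitary : Matrix (Fin d) (Fin d) ℂ) n
  have hWW : star W * W = 1 :=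
    mem_unitaryGroup_iff'.mp (tpow_mem_unitaryGroup hA.eigenvectorUnitary.2)
  have hspec : tpow A n = W * tpow (diagonal (RCLike.ofReal ∘ hA.eigenvalues)) n * star W := by
    conv_lhs => rw [hA.spectral_theorem]
    rw [Unitary.conjStarAlgAut_apply, star_eq_conjTranspose W, tpow_conjTranspose, tpow_mul,
      tpow_mul, star_eq_conjTranspose]
  calc star W * tpow A n * W
      = (star W * W) * tpow (diagonal (RCLike.ofReal ∘ hA.eigenvalues)) n * (star W * W) := by
        simp only [hspec, mul_assoc]
    _ = _ := by rw [hWW, one_mul, mul_one, tpow_diagonal]; rfl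

end TensorPower

theorem isUnitaryMat_submatrix_equiv {α β : Type*} [Fintype α] [Fintype β] [DecidableEq α]
    [DecidableEq β] {V : Matrix α α ℂ} (hV : V ∈ unitaryGroup α ℂ) (e : β ≃ α) :
    IsUnitaryMat (V.submatrix e id) := by
  rw [IsUnitaryMat, conjTranspose_submatrix, ← star_eq_conjTranspose,
    ← submatrix_mul V (star V) e id e Function.bijective_id, submatrix_mul_equiv,
    mem_unitaryGroup_iff.mp hV, mem_unitaryGroup_iff'.mp hV, submatrix_one_equiv]
  exact ⟨rfl, submatrix_id_id 1⟩

theorem submatrix_mul_mul_conjTranspose_submatrix {α β R : Type*} [Fintype α] [Semiring R]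
    [StarRing R] (V M : Matrix α α R) (e : β → α) :
    V.submatrix e id * M * (V.submatrix e id)ᴴ = (V * M * Vᴴ).submatrix e e := by
  rw [conjTranspose_submatrix]
  ext i j
  simp [mul_apply]

theorem ptraceSnd_diagonal {a b : Type*} [Fintype b] [DecidableEq a] [DecidableEq b]
    (c : a × b → ℂ) :
    ptraceSnd (diagonal c) = diagonal fun i => ∑ k, c (i, k) := by
  ext i j
  by_cases h : i = j
  · simp [ptraceSnd, h]
  · simp [ptraceSnd, h, diagonal_apply_ne]

theorem proj_single {a : Type*} [DecidableEq a] (i : a) :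
    proj (Pi.single i 1 : a → ℂ) = diagonal (Pi.single i 1) := by
  rw [proj, diagonal_single, single_eq_single_vecMulVec_single, ← Pi.single_star, star_one]

theorem Matrix.IsHermitian.sum_comp_eigenvalues_of_eq_diagonal {a 𝕜 : Type*} [Fintype a]
    [DecidableEq a] [RCLike 𝕜] {A : Matrix a a 𝕜} (hA : A.IsHermitian) {c : a → ℝ}
    (hc : A = diagonal fun i => (c i : 𝕜)) (f : ℝ → ℝ) :
    ∑ i, f (hA.eigenvalues i) = ∑ i, f (c i) := by
  have hroots := hA.roots_charpoly_eq_eigenvalues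
  have hcharpoly : A.charpoly = ∏ i, (Polynomial.X - Polynomial.C (c i : 𝕜)) := by
    rw [hc, charpoly_diagonal]
  rw [hcharpoly, Polynomial.roots_prod _ _
    (prod_ne_zero_iff.mpr fun i _ => Polynomial.X_sub_C_ne_zero _)] at hroots
  simp only [Polynomial.roots_X_sub_C, Multiset.bind_singleton] at hroots
  have := congrArg (fun m => (Multiset.map (f ∘ RCLike.re) m).sum) hroots
  simp only [Multiset.map_map, Function.comp_def, RCLike.ofReal_re] at this
  exact this.symm

theorem traceNorm_diagonal_ofReal {a : Type*} [Fintype a] [DecidableEq a] (c : a → ℝ) :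
    traceNorm (diagonal fun i => (c i : ℂ)) = ∑ i, |c i| := by
  set hH := (posSemidef_conjTranspose_mul_self (diagonal fun i => (c i : ℂ))).1
  have hsq : (diagonal fun i => (c i : ℂ))ᴴ * diagonal (fun i => (c i : ℂ))
      = diagonal fun i => ((c i ^ 2 : ℝ) : ℂ) := by
    rw [diagonal_conjTranspose, diagonal_mul_diagonal]
    congr 1
    funext i
    simp [sq]
  rw [traceNorm, trace_mul_cycle, mem_unitaryGroup_iff'.mp hH.eigenvectorUnitary.2, one_mul,
    trace_diagonal, Complex.re_sum]
  simp only [Function.comp_apply, Complex.ofReal_re]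
  rw [hH.sum_comp_eigenvalues_of_eq_diagonal hsq Real.sqrt]
  exact sum_congr rfl fun i _ => Real.sqrt_sq_eq_abs (c i)

theorem sum_abs_sub_single_eq {a : Type*} [Fintype a] [DecidableEq a] {s : a → ℝ}
    (hs0 : ∀ i, 0 ≤ s i) (hs : ∑ i, s i = 1) (i₀ : a) :
    ∑ i, |s i - (Pi.single i₀ 1 : a → ℝ) i| = 2 * (1 - s i₀) := by
  have hle : s i₀ ≤ 1 := hs ▸ single_le_sum (fun i _ => hs0 i) (mem_univ i₀)
  have hrest : ∑ i ∈ univ.erase i₀, s i = 1 - s i₀ := by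
    rw [← hs, ← add_sum_erase _ _ (mem_univ i₀), add_sub_cancel_left]
  rw [← add_sum_erase _ _ (mem_univ i₀), Pi.single_eq_same, abs_of_nonpos (by linarith),
    sum_congr rfl fun i hi => by rw [Pi.single_eq_of_ne (ne_of_mem_erase hi), sub_zero,
      abs_of_nonneg (hs0 i)], hrest]
  ring

theorem traceNorm_diagonal_sub_proj_single {a : Type*} [Fintype a] [DecidableEq a] {s : a → ℝ}
    (hs0 : ∀ i, 0 ≤ s i) (hs : ∑ i, s i = 1) (i₀ : a) :
    traceNorm (diagonal (fun i => (s i : ℂ)) - proj (Pi.single i₀ 1)) = 2 * (1 - s i₀) := by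
  have hdiff : diagonal (fun i => (s i : ℂ)) - proj (Pi.single i₀ 1)
      = diagonal fun i => ((s i - (Pi.single i₀ 1 : a → ℝ) i : ℝ) : ℂ) := by
    rw [proj_single, diagonal_sub]
    congr 1
    funext i
    by_cases h : i = i₀ <;> simp [h]
  rw [hdiff, traceNorm_diagonal_ofReal, sum_abs_sub_single_eq hs0 hs]

namespace IsDensity

variable {d : ℕ} {ρ : Matrix (Fin d) (Fin d) ℂ} (hρ : IsDensity ρ)
include hρ

theorem sum_eigenvalues : ∑ i, hρ.1.1.eigenvalues i = 1 := by
  have h := hρ.2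
  rw [hρ.1.1.trace_eq_sum_eigenvalues] at h
  simpa using congrArg Complex.re h

theorem vnEntropy_eq :
    vnEntropy ρ = ∑ i, hρ.1.1.eigenvalues i * -Real.logb 2 (hρ.1.1.eigenvalues i) := by
  simp [vnEntropy, dif_pos hρ.1.1, sum_neg_distrib]

theorem vnEntropy_nonneg : 0 ≤ vnEntropy ρ := by
  rw [hρ.vnEntropy_eq]
  refine sum_nonneg fun i _ => mul_nonneg (hρ.1.eigenvalues_nonneg i) (neg_nonneg.mpr ?_)
  exact Real.logb_nonpos one_lt_two (hρ.1.eigenvalues_nonneg i)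
    (hρ.sum_eigenvalues ▸ single_le_sum (fun j _ => hρ.1.eigenvalues_nonneg j) (mem_univ i))

end IsDensity

theorem exists_isUnitaryMat_traceNorm_ptraceSnd_sub_proj_le {d n p g : ℕ}
    {ρ : Matrix (Fin d) (Fin d) ℂ} (hρ : IsDensity ρ) (T : Finset (Fin n → Fin d))
    (hpg : d ^ n = p * g) (hT : #T ≤ g) (hp : 0 < p) :
    ∃ U : Matrix (Fin p × Fin g) (Fin n → Fin d) ℂ, IsUnitaryMat U ∧
      ∃ v : Fin p → ℂ, star v ⬝ᵥ v = 1 ∧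
        traceNorm (ptraceSnd (U * tpow ρ n * Uᴴ) - proj v)
          ≤ 2 * (1 - ∑ x ∈ T, ∏ i, hρ.1.1.eigenvalues (x i)) := by
  classical
  set lam := hρ.1.1.eigenvalues
  set q : (Fin n → Fin d) → ℝ := fun x => ∏ i, lam (x i)
  have hq0 : ∀ x, 0 ≤ q x := fun x => prod_nonneg fun i _ => hρ.1.eigenvalues_nonneg (x i)
  let i₀ : Fin p := ⟨0, hp⟩
  obtain ⟨e, he⟩ := exists_equiv_forall_mem_of_card_le (s := T)
    (t := {i₀} ×ˢ (univ : Finset (Fin g))) (by simp [hpg]) (by simpa using hT)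
  set W := tpow (hρ.1.1.eigenvectorUnitary : Matrix (Fin d) (Fin d) ℂ) n
  have hW : star W ∈ unitaryGroup _ ℂ :=
    Unitary.star_mem (tpow_mem_unitaryGroup hρ.1.1.eigenvectorUnitary.2)
  set s : Fin p → ℝ := fun i => ∑ k, q (e.symm (i, k))
  have hs0 : ∀ i, 0 ≤ s i := fun i => sum_nonneg fun k _ => hq0 _
  have hs : ∑ i, s i = 1 := by
    rw [← Fintype.sum_prod_type' (fun i k => q (e.symm (i, k))), e.symm.sum_comp]
    exact sum_prod_eq_one lam hρ.sum_eigenvalues n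
  have hTs : ∑ x ∈ T, q x ≤ s i₀ :=
    calc ∑ x ∈ T, q x = ∑ y ∈ T.map e.toEmbedding, q (e.symm y) := by simp
      _ ≤ ∑ y ∈ {i₀} ×ˢ univ, q (e.symm y) :=
        sum_le_sum_of_subset_of_nonneg (map_subset_iff_subset_preimage.mpr
          fun x hx => mem_preimage.mpr (he x hx)) fun _ _ _ => hq0 _
      _ = s i₀ := by rw [sum_product, sum_singleton]
  refine ⟨(star W).submatrix e.symm id, isUnitaryMat_submatrix_equiv hW e.symm,
    Pi.single i₀ 1, by simp, ?_⟩
  have hstate :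
      ptraceSnd ((star W).submatrix e.symm id * tpow ρ n * ((star W).submatrix e.symm id)ᴴ)
        = diagonal fun i => (s i : ℂ) := by
    rw [submatrix_mul_mul_conjTranspose_submatrix, ← star_eq_conjTranspose, star_star,
      hρ.1.1.conj_tpow_eq_diagonal, submatrix_diagonal_equiv, ptraceSnd_diagonal]
    simp [s, q, lam]
  rw [hstate, traceNorm_diagonal_sub_proj_single hs0 hs]
  linarith

theorem two_rpow_mul_logb_sub_le_pow_sub {d n k : ℕ} (hd : 0 < d) (hkn : k ≤ n) {t : ℝ}
    (hk : (d : ℝ) ^ k ≤ 2 ^ (n * t)) :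
    (2 : ℝ) ^ (n * (Real.logb 2 d - t)) ≤ (d : ℝ) ^ (n - k) := by
  have hdn : (2 : ℝ) ^ (n * Real.logb 2 d) = (d : ℝ) ^ (n - k) * (d : ℝ) ^ k := by
    rw [← pow_add, Nat.sub_add_cancel hkn, mul_comm, Real.rpow_mul zero_le_two,
      Real.rpow_logb two_pos one_lt_two.ne' (by exact_mod_cast hd), Real.rpow_natCast]
  rw [mul_sub, Real.rpow_sub two_pos, hdn, div_le_iff₀ (by positivity)]
  exact mul_le_mul_of_nonneg_left hk (by positivity)

theorem exists_le_pow_and_two_rpow_le_pow_sub {d m n : ℕ} (hd : 0 < d) (hm : m ≤ d ^ n)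
    {s t : ℝ} (ht : 0 ≤ t) (hmt : (m : ℝ) ≤ 2 ^ (n * t)) (hds : (d : ℝ) ≤ 2 ^ (n * s)) :
    ∃ k ≤ n, m ≤ d ^ k ∧ (2 : ℝ) ^ (n * (Real.logb 2 d - (t + s))) ≤ (d : ℝ) ^ (n - k) := by
  obtain ⟨k, hkn, hmk, hk⟩ := Nat.exists_le_pow_le_mul_max hd hm
  refine ⟨k, hkn, hmk, two_rpow_mul_logb_sub_le_pow_sub hd hkn ?_⟩
  calc (d : ℝ) ^ k ≤ d * max (m : ℝ) 1 := by exact_mod_cast hk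
    _ ≤ 2 ^ (n * s) * 2 ^ (n * t) :=
      mul_le_mul hds (max_le hmt (Real.one_le_rpow one_le_two (by positivity)))
        (by positivity) (by positivity)
    _ = 2 ^ (n * (t + s)) := by rw [← Real.rpow_add two_pos]; ring_nf

theorem purity_concentration_achievability {dA : ℕ}
    (ρ : Matrix (Fin dA) (Fin dA) ℂ) (hρ : IsDensity ρ)
    (ε δ : ℝ) (hε : 0 < ε) (hδ : 0 < δ) :
    ∃ n₀ : ℕ, ∀ n ≥ n₀, ∃ (p g : ℕ)
      (U : Matrix (Fin p × Fin g) (Fin n → Fin dA) ℂ), IsUnitaryMat U ∧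
      ∃ v : Fin p → ℂ, star v ⬝ᵥ v = 1 ∧
        (2 : ℝ) ^ ((n : ℝ) * (Real.logb 2 dA - vnEntropy ρ - δ)) ≤ (p : ℝ) ∧
        traceNorm (ptraceSnd (U * tpow ρ n * Uᴴ) - proj v) ≤ ε := by
  set lam := hρ.1.1.eigenvalues
  have hd : 0 < dA := Nat.pos_of_ne_zero fun h => by
    subst h; simpa using hρ.sum_eigenvalues
  have htypical := eventually_one_sub_le_sum_typicalSet lam hρ.1.eigenvalues_nonneg
    hρ.sum_eigenvalues (half_pos hε) (half_pos hδ)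
  have hgrowth : ∀ᶠ n : ℕ in atTop, (dA : ℝ) ≤ 2 ^ (n * (δ / 2)) := by
    filter_upwards [(tendsto_pow_atTop_atTop_of_one_lt
      (Real.one_lt_rpow one_lt_two (half_pos hδ))).eventually_ge_atTop (dA : ℝ)] with n hn
    rwa [mul_comm, Real.rpow_mul_natCast zero_le_two]
  obtain ⟨n₀, hn₀⟩ := eventually_atTop.mp (htypical.and hgrowth)
  refine ⟨n₀, fun n hn => ?_⟩
  obtain ⟨hT, hdn⟩ := hn₀ n hn
  rw [← hρ.vnEntropy_eq] at hT
  set T := typicalSet lam n (vnEntropy ρ + δ / 2)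
  obtain ⟨k, hkn, hTk, hdim⟩ := exists_le_pow_and_two_rpow_le_pow_sub hd
    ((card_le_univ T).trans (by simp)) (by linarith [hρ.vnEntropy_nonneg])
    (card_typicalSet_le lam hρ.1.eigenvalues_nonneg hρ.sum_eigenvalues n _) hdn
  obtain ⟨U, hU, v, hv, hnorm⟩ := exists_isUnitaryMat_traceNorm_ptraceSnd_sub_proj_le hρ T
    (by rw [← pow_add, Nat.sub_add_cancel hkn]) hTk (pow_pos hd (n - k))
  refine ⟨_, _, U, hU, v, hv, ?_, by linarith⟩
  rw [sub_sub, ← add_halves δ, ← add_assoc]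
  exact_mod_cast hdim
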